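/- arXiv:2505.03081 — 4 statements merged into one kernel-verified Lean document; each statement's English description precedes it below -/
import Mathlib

section
/- Let L be a Lie algebra over a field F and let S be a semilattice of Lie algebras over F with an additive identity 0, i.e. a Lie inverse semialgebra with zero satisfying 0_{[x,y]} = 0_{x+y} for all x, y ∈ S. Let ρ : L → S be a premorphism with ρ(0) = 0, and let τ : L → E(L) be given by τ(a) = (F·a, a). Then there is a unique map η : E(L) → S such that η(u+v) = η(u) + η(v) for all u, v ∈ E(L), η(α•u) = α•η(u) for all u ∈ E(L) and nonzero α ∈ F, η([u,v]) = [η(u), η(v)] for all u, v ∈ E(L), and η ∘ τ = ρ. -/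
/-- An inverse semivector space over a field `F`. -/
structure InvSemivectorSpace (F : Type*) [Field F] (V : Type*) where
  add : V → V → V
  neg : V → V
  smul : F → V → V
  add_comm' : ∀ x y : V, add x y = add y x
  add_assoc' : ∀ x y z : V, add (add x y) z = add x (add y z)
  add_neg_add : ∀ x : V, add (add x (neg x)) x = x
  neg_add_neg : ∀ x : V, add (add (neg x) x) (neg x) = neg x
  add_smul' : ∀ (α β : F) (x : V), smul (α + β) x = add (smul α x) (smul β x)
  smul_add' : ∀ (α : F) (x y : V), smul α (add x y) = add (smul α x) (smul α y)
  smul_smul' : ∀ (α β : F) (x : V), smul α (smul β x) = smul (α * β) x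
  one_smul' : ∀ x : V, smul 1 x = x

namespace InvSemivectorSpace

variable {F : Type*} [Field F] {V : Type*} (S : InvSemivectorSpace F V)

/-- `0_x := x + neg x`. -/
def z0 (x : V) : V := S.add x (S.neg x)

/-- The natural partial order: `x ⪯ y` iff `x = y + 0_x`. -/
def le (x y : V) : Prop := x = S.add y (S.z0 x)

/-- Additive idempotents. -/
def IsIdem (e : V) : Prop := S.add e e = e

end InvSemivectorSpace


/-- A Lie inverse semialgebra over `F`. -/
structure LieInvSemialgebra (F : Type*) [Field F] (V : Type*) extends
    InvSemivectorSpace F V where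
  br : V → V → V
  smul_br : ∀ (α : F), α ≠ 0 → ∀ x y : V, smul α (br x y) = br (smul α x) y
  br_smul : ∀ (α : F), α ≠ 0 → ∀ x y : V, smul α (br x y) = br x (smul α y)
  br_add_le : ∀ x y z : V,
    toInvSemivectorSpace.le (add (br x y) (br x z)) (br x (add y z))
  br_skew : ∀ x y : V, br x y = neg (br y x)
  br_idem_add : ∀ x z e : V, toInvSemivectorSpace.IsIdem e →
    br x (add e z) = add (br x e) (br x z)
  jacobi_le : ∀ x y z : V,
    toInvSemivectorSpace.le
      (add (add (br (br x y) z) (br (br y z) x)) (br (br z x) y))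
      (toInvSemivectorSpace.z0 (add (add x y) z))
  br_idem : ∀ e f : V, toInvSemivectorSpace.IsIdem e → toInvSemivectorSpace.IsIdem f →
    br e f = add e f

/-- `E(L)`: pairs `(A, a)` where `A` is a finite-dimensional subspace of the Lie
algebra `L` and `a ∈ A`. -/
def EL (F : Type*) [Field F] (L : Type*) [LieRing L] [LieAlgebra F L] :=
  {p : Submodule F L × L // FiniteDimensional F p.1 ∧ p.2 ∈ p.1}

namespace EL

variable {F : Type*} [Field F] {L : Type*} [LieRing L] [LieAlgebra F L]

/-- `(A,a) + (B,b) = (A + B, a + b)`. -/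
def add (u v : EL F L) : EL F L :=
  ⟨(u.1.1 ⊔ v.1.1, u.1.2 + v.1.2),
    haveI := u.2.1
    haveI := v.2.1
    ⟨Submodule.finiteDimensional_sup _ _,
      Submodule.add_mem _ (Submodule.mem_sup_left u.2.2) (Submodule.mem_sup_right v.2.2)⟩⟩

/-- `neg (A,a) = (A, -a)`. -/
def neg (u : EL F L) : EL F L :=
  ⟨(u.1.1, -u.1.2), ⟨u.2.1, Submodule.neg_mem _ u.2.2⟩⟩

/-- `α • (A,a) = (A, α • a)`. -/
def smul (α : F) (u : EL F L) : EL F L :=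
  ⟨(u.1.1, α • u.1.2), ⟨u.2.1, Submodule.smul_mem _ _ u.2.2⟩⟩

/-- `[(A,a),(B,b)] = (A + B + F⁅a,b⁆, ⁅a,b⁆)`. -/
def br (u v : EL F L) : EL F L :=
  ⟨(u.1.1 ⊔ v.1.1 ⊔ Submodule.span F {⁅u.1.2, v.1.2⁆}, ⁅u.1.2, v.1.2⁆),
    haveI := u.2.1
    haveI := v.2.1
    ⟨Submodule.finiteDimensional_sup _ _,
      Submodule.mem_sup_right (Submodule.mem_span_singleton_self _)⟩⟩

/-- `0_u = u + neg u`. -/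
def z0 (u : EL F L) : EL F L := add u (neg u)

/-- The natural partial order on `E(L)`. -/
def le (u v : EL F L) : Prop := u = add v (z0 u)

/-- The zero element `(0, 0)` of `E(L)`. -/
def zero : EL F L :=
  ⟨(⊥, 0), ⟨inferInstance, Submodule.zero_mem _⟩⟩

end EL

/-- The map `τ : L → E(L)`, `a ↦ (F·a, a)`. -/
def tau {F : Type*} [Field F] {L : Type*} [LieRing L] [LieAlgebra F L]
    (a : L) : EL F L :=
  ⟨(Submodule.span F {a}, a),
    ⟨inferInstance, Submodule.mem_span_singleton_self a⟩⟩

namespace StmtAux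

variable {F : Type*} [Field F] {T : Type*} (S : LieInvSemialgebra F T)

def mon (zS : T) (hzero : ∀ t : T, S.add zS t = t) : AddCommMonoid T where
  add := S.add
  zero := zS
  add_assoc := S.add_assoc'
  add_comm := S.add_comm'
  zero_add := hzero
  add_zero t := (S.add_comm' t zS).trans (hzero t)
  nsmul := fun n x => Nat.rec zS (fun _ ih => S.add x ih) n
  nsmul_zero := fun _ => rfl
  nsmul_succ := fun n x => S.add_comm' x _

lemma inv_unique (zS : T) (hzero : ∀ t : T, S.add zS t = t) {x y : T} (h1 : S.add (S.add x y) x = x)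
    (h2 : S.add (S.add y x) y = y) : y = S.neg x := by
  letI := mon S zS hzero
  have a1 : x + S.neg x + x = x := S.add_neg_add x
  have a2 : S.neg x + x + S.neg x = S.neg x := S.neg_add_neg x
  have h1' : x + y + x = x := h1
  have h2' : y + x + y = y := h2
  have idem1 : (x + y) + (x + y) = x + y := by
    calc (x + y) + (x + y) = (y + x + y) + x := by abel
    _ = y + x := by rw [h2']
    _ = x + y := by abel
  have idem2 : (x + S.neg x) + (x + S.neg x) = x + S.neg x := by
    calc (x + S.neg x) + (x + S.neg x) = (x + S.neg x + x) + S.neg x := by abel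
    _ = x + S.neg x := by rw [a1]
  have e1 : y = x + y + S.neg x := by
    calc y = y + x + y := h2'.symm
    _ = y + (x + S.neg x + x) + y := by rw [a1]
    _ = S.neg x + ((x + y) + (x + y)) := by abel
    _ = S.neg x + (x + y) := by rw [idem1]
    _ = x + y + S.neg x := by abel
  have e2 : S.neg x = x + y + S.neg x := by
    calc S.neg x = S.neg x + x + S.neg x := a2.symm
    _ = S.neg x + (x + y + x) + S.neg x := by rw [h1']
    _ = y + ((x + S.neg x) + (x + S.neg x)) := by abel
    _ = y + (x + S.neg x) := by rw [idem2]
    _ = x + y + S.neg x := by abel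
  exact e1.trans e2.symm

lemma smul_add_smul (a b : F) (x : T) :
    S.add (S.smul a x) (S.smul b x) = S.smul (a + b) x := (S.add_smul' a b x).symm

lemma smul_neg_one (zS : T) (hzero : ∀ t : T, S.add zS t = t) (x : T) : S.smul (-1) x = S.neg x := by
  refine inv_unique S zS hzero ?_ ?_
  · calc S.add (S.add x (S.smul (-1) x)) x
        = S.add (S.add (S.smul 1 x) (S.smul (-1) x)) (S.smul 1 x) := by rw [S.one_smul']
    _ = S.smul ((1 : F) + (-1) + 1) x := by rw [smul_add_smul S, smul_add_smul S]
    _ = x := by norm_num [S.one_smul']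
  · calc S.add (S.add (S.smul (-1) x) x) (S.smul (-1) x)
        = S.add (S.add (S.smul (-1) x) (S.smul 1 x)) (S.smul (-1) x) := by rw [S.one_smul']
    _ = S.smul ((-1 : F) + 1 + (-1)) x := by rw [smul_add_smul S, smul_add_smul S]
    _ = S.smul (-1) x := by norm_num

lemma z0_eq (zS : T) (hzero : ∀ t : T, S.add zS t = t) (x : T) : S.z0 x = S.smul 0 x := by
  show S.add x (S.neg x) = S.smul 0 x
  rw [← smul_neg_one S zS hzero]
  calc S.add x (S.smul (-1) x) = S.add (S.smul 1 x) (S.smul (-1) x) := by rw [S.one_smul']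
  _ = S.smul (0 : F) x := by rw [smul_add_smul S]; norm_num

lemma z0_add (zS : T) (hzero : ∀ t : T, S.add zS t = t) (x y : T) : S.z0 (S.add x y) = S.add (S.z0 x) (S.z0 y) := by
  simp only [z0_eq S zS hzero]; rw [S.smul_add']

lemma z0_smul (zS : T) (hzero : ∀ t : T, S.add zS t = t) (α : F) (x : T) : S.z0 (S.smul α x) = S.z0 x := by
  simp only [z0_eq S zS hzero]; rw [S.smul_smul', zero_mul]

lemma smul_z0 (zS : T) (hzero : ∀ t : T, S.add zS t = t) (α : F) (x : T) : S.smul α (S.z0 x) = S.z0 x := by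
  simp only [z0_eq S zS hzero]; rw [S.smul_smul', mul_zero]

lemma z0_idem (zS : T) (hzero : ∀ t : T, S.add zS t = t) (x : T) : S.add (S.z0 x) (S.z0 x) = S.z0 x := by
  simp only [z0_eq S zS hzero]; rw [smul_add_smul S]; norm_num

lemma add_z0 (zS : T) (hzero : ∀ t : T, S.add zS t = t) (x : T) : S.add x (S.z0 x) = x := by
  rw [z0_eq S zS hzero]
  calc S.add x (S.smul 0 x) = S.add (S.smul 1 x) (S.smul 0 x) := by rw [S.one_smul']
  _ = x := by rw [smul_add_smul S]; norm_num [S.one_smul']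

lemma neg_idem (zS : T) (hzero : ∀ t : T, S.add zS t = t) {e : T} (he : S.IsIdem e) : S.neg e = e := by
  have he' : S.add e e = e := he
  refine (inv_unique S zS hzero ?_ ?_).symm <;> rw [he', he']

lemma idem_z0 (zS : T) (hzero : ∀ t : T, S.add zS t = t) {e : T} (he : S.IsIdem e) : S.z0 e = e := by
  show S.add e (S.neg e) = e
  rw [neg_idem S zS hzero he]; exact he

lemma z0_z0 (zS : T) (hzero : ∀ t : T, S.add zS t = t) (x : T) : S.z0 (S.z0 x) = S.z0 x := idem_z0 S zS hzero (z0_idem S zS hzero x)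

lemma idem_smul (zS : T) (hzero : ∀ t : T, S.add zS t = t) (α : F) {e : T} (he : S.IsIdem e) : S.smul α e = e := by
  rw [← idem_z0 S zS hzero he, smul_z0 S zS hzero]

lemma neg_add (zS : T) (hzero : ∀ t : T, S.add zS t = t) (x y : T) : S.neg (S.add x y) = S.add (S.neg x) (S.neg y) := by
  rw [← smul_neg_one S zS hzero (S.add x y), ← smul_neg_one S zS hzero x,
    ← smul_neg_one S zS hzero y, S.smul_add']

lemma neg_z0 (zS : T) (hzero : ∀ t : T, S.add zS t = t) (x : T) : S.neg (S.z0 x) = S.z0 x := by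
  rw [← smul_neg_one S zS hzero (S.z0 x), smul_z0 S zS hzero]

lemma add_zS (zS : T) (hzero : ∀ t : T, S.add zS t = t) (x : T) : S.add x zS = x := (S.add_comm' x zS).trans (hzero x)

lemma zS_idem (zS : T) (hzero : ∀ t : T, S.add zS t = t) : S.IsIdem zS := hzero zS

lemma br_right_idem (zS : T) (hzero : ∀ t : T, S.add zS t = t) (hsem : ∀ x y : T, S.z0 (S.br x y) = S.z0 (S.add x y)) {e : T} (he : S.IsIdem e) (x : T) :
    S.br x e = S.add (S.z0 x) e := by
  have hi : S.IsIdem (S.br x e) := by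
    show S.add (S.br x e) (S.br x e) = S.br x e
    rw [← S.br_idem_add x e e he, he]
  calc S.br x e = S.z0 (S.br x e) := (idem_z0 S zS hzero hi).symm
  _ = S.z0 (S.add x e) := hsem x e
  _ = S.add (S.z0 x) (S.z0 e) := z0_add S zS hzero x e
  _ = S.add (S.z0 x) e := by rw [idem_z0 S zS hzero he]

lemma br_expand (zS : T) (hzero : ∀ t : T, S.add zS t = t) (hsem : ∀ x y : T, S.z0 (S.br x y) = S.z0 (S.add x y)) (x y : T) {e f : T} (he : S.IsIdem e) (hf : S.IsIdem f) :
    S.br (S.add x e) (S.add y f) =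
      S.add (S.add (S.add (S.br x y) (S.z0 x)) (S.z0 y)) (S.add e f) := by
  letI := mon S zS hzero
  have h1 : S.br (S.add x e) (S.add y f)
      = S.add (S.br (S.add x e) f) (S.br (S.add x e) y) := by
    rw [show S.add y f = S.add f y from S.add_comm' y f, S.br_idem_add _ _ _ hf]
  have h2 : S.br (S.add x e) f = S.add (S.add (S.z0 x) e) f := by
    rw [br_right_idem S zS hzero hsem hf (S.add x e), z0_add S zS hzero,
      idem_z0 S zS hzero he]
  have h3 : S.br (S.add x e) y = S.add (S.add (S.z0 y) e) (S.br x y) := by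
    rw [S.br_skew (S.add x e) y, show S.add x e = S.add e x from S.add_comm' x e,
      S.br_idem_add y x e he, neg_add S zS hzero,
      br_right_idem S zS hzero hsem he y, neg_add S zS hzero, neg_z0 S zS hzero,
      neg_idem S zS hzero he, ← S.br_skew]
  rw [h1, h2, h3]
  have he' : e + e = e := he
  show ((S.z0 x + e) + f) + ((S.z0 y + e) + S.br x y)
      = ((S.br x y + S.z0 x) + S.z0 y) + (e + f)
  calc ((S.z0 x + e) + f) + ((S.z0 y + e) + S.br x y)
      = ((S.br x y + S.z0 x) + S.z0 y) + ((e + e) + f) := by abel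
  _ = ((S.br x y + S.z0 x) + S.z0 y) + (e + f) := by rw [he']

end StmtAux
namespace StmtAux

variable {F : Type*} [Field F] {T : Type*} (S : LieInvSemialgebra F T)
  {L : Type*} [LieRing L] [LieAlgebra F L]

/-- Unfolded form of `hadd`. -/
lemma hadd_unfold (zS : T) (hzero : ∀ t : T, S.add zS t = t) (ρ : L → T)
    (hadd : ∀ x y : L, S.le (S.add (ρ x) (ρ y)) (ρ (x + y))) (a b : L) :
    S.add (ρ a) (ρ b) = S.add (ρ (a + b)) (S.add (S.z0 (ρ a)) (S.z0 (ρ b))) := by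
  have h' : S.add (ρ a) (ρ b) = S.add (ρ (a + b)) (S.z0 (S.add (ρ a) (ρ b))) := hadd a b
  rw [h', z0_add S zS hzero]

/-- Unfolded form of `hbr`. -/
lemma hbr_unfold (zS : T) (hzero : ∀ t : T, S.add zS t = t)
    (hsem : ∀ x y : T, S.z0 (S.br x y) = S.z0 (S.add x y)) (ρ : L → T)
    (hbr : ∀ x y : L, S.le (S.br (ρ x) (ρ y)) (ρ ⁅x, y⁆)) (a b : L) :
    S.br (ρ a) (ρ b) = S.add (ρ ⁅a, b⁆) (S.add (S.z0 (ρ a)) (S.z0 (ρ b))) := by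
  have h' : S.br (ρ a) (ρ b) = S.add (ρ ⁅a, b⁆) (S.z0 (S.br (ρ a) (ρ b))) := hbr a b
  rw [h', hsem, z0_add S zS hzero]

lemma z0_add_absorb (zS : T) (hzero : ∀ t : T, S.add zS t = t) (ρ : L → T)
    (hadd : ∀ x y : L, S.le (S.add (ρ x) (ρ y)) (ρ (x + y))) (a b : L) :
    S.add (S.add (S.z0 (ρ a)) (S.z0 (ρ b))) (S.z0 (ρ (a + b)))
      = S.add (S.z0 (ρ a)) (S.z0 (ρ b)) := by
  have h := congrArg S.z0 (hadd_unfold S zS hzero ρ hadd a b)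
  simp only [z0_add S zS hzero, z0_z0 S zS hzero] at h
  exact (S.add_comm' _ _).trans h.symm

lemma z0_br_absorb (zS : T) (hzero : ∀ t : T, S.add zS t = t)
    (hsem : ∀ x y : T, S.z0 (S.br x y) = S.z0 (S.add x y)) (ρ : L → T)
    (hbr : ∀ x y : L, S.le (S.br (ρ x) (ρ y)) (ρ ⁅x, y⁆)) (a b : L) :
    S.add (S.add (S.z0 (ρ a)) (S.z0 (ρ b))) (S.z0 (ρ ⁅a, b⁆))
      = S.add (S.z0 (ρ a)) (S.z0 (ρ b)) := by
  have h := congrArg S.z0 (hbr_unfold S zS hzero hsem ρ hbr a b)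
  rw [hsem] at h
  simp only [z0_add S zS hzero, z0_z0 S zS hzero] at h
  exact (S.add_comm' _ _).trans h.symm

/-- Sum of the idempotents `0_{ρ a}`, `a ∈ l`. -/
def esum (zS : T) (ρ : L → T) (l : List L) : T :=
  l.foldr (fun a t => S.add (S.z0 (ρ a)) t) zS

lemma esum_idem (zS : T) (hzero : ∀ t : T, S.add zS t = t) (ρ : L → T) (l : List L) :
    S.add (esum S zS ρ l) (esum S zS ρ l) = esum S zS ρ l := by
  induction l with
  | nil => exact hzero zS
  | cons a l ih =>
    letI := StmtAux.mon S zS hzero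
    have ihe : esum S zS ρ l + esum S zS ρ l = esum S zS ρ l := ih
    have hz : S.z0 (ρ a) + S.z0 (ρ a) = S.z0 (ρ a) := z0_idem S zS hzero (ρ a)
    show (S.z0 (ρ a) + esum S zS ρ l) + (S.z0 (ρ a) + esum S zS ρ l)
        = S.z0 (ρ a) + esum S zS ρ l
    calc (S.z0 (ρ a) + esum S zS ρ l) + (S.z0 (ρ a) + esum S zS ρ l)
        = (S.z0 (ρ a) + S.z0 (ρ a)) + (esum S zS ρ l + esum S zS ρ l) := by abel
    _ = S.z0 (ρ a) + esum S zS ρ l := by rw [ihe, hz]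

lemma esum_append (zS : T) (hzero : ∀ t : T, S.add zS t = t) (ρ : L → T) (l m : List L) :
    esum S zS ρ (l ++ m) = S.add (esum S zS ρ l) (esum S zS ρ m) := by
  induction l with
  | nil => exact (hzero _).symm
  | cons a l ih =>
    show S.add (S.z0 (ρ a)) (esum S zS ρ (l ++ m))
        = S.add (S.add (S.z0 (ρ a)) (esum S zS ρ l)) (esum S zS ρ m)
    rw [ih, ← S.add_assoc']

lemma smul_esum (zS : T) (hzero : ∀ t : T, S.add zS t = t) (ρ : L → T) (α : F) (l : List L) :
    S.smul α (esum S zS ρ l) = esum S zS ρ l := by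
  induction l with
  | nil => exact idem_smul S zS hzero α (hzero zS)
  | cons a l ih =>
    show S.smul α (S.add (S.z0 (ρ a)) (esum S zS ρ l)) = S.add (S.z0 (ρ a)) (esum S zS ρ l)
    rw [S.smul_add', smul_z0 S zS hzero, ih]

lemma esum_mem (zS : T) (hzero : ∀ t : T, S.add zS t = t) (ρ : L → T) (l : List L) {a : L}
    (ha : a ∈ l) : S.add (esum S zS ρ l) (S.z0 (ρ a)) = esum S zS ρ l := by
  induction l with
  | nil => simp at ha
  | cons b l ih =>
    letI := StmtAux.mon S zS hzero
    rcases List.mem_cons.mp ha with h | h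
    · subst h
      have hz : S.z0 (ρ a) + S.z0 (ρ a) = S.z0 (ρ a) := z0_idem S zS hzero (ρ a)
      show (S.z0 (ρ a) + esum S zS ρ l) + S.z0 (ρ a) = S.z0 (ρ a) + esum S zS ρ l
      calc (S.z0 (ρ a) + esum S zS ρ l) + S.z0 (ρ a)
          = (S.z0 (ρ a) + S.z0 (ρ a)) + esum S zS ρ l := by abel
      _ = S.z0 (ρ a) + esum S zS ρ l := by rw [hz]
    · have ih' : esum S zS ρ l + S.z0 (ρ a) = esum S zS ρ l := ih h
      show (S.z0 (ρ b) + esum S zS ρ l) + S.z0 (ρ a) = S.z0 (ρ b) + esum S zS ρ l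
      calc (S.z0 (ρ b) + esum S zS ρ l) + S.z0 (ρ a)
          = S.z0 (ρ b) + (esum S zS ρ l + S.z0 (ρ a)) := by abel
      _ = S.z0 (ρ b) + esum S zS ρ l := by rw [ih']

lemma esum_absorb (zS : T) (hzero : ∀ t : T, S.add zS t = t) (ρ : L → T)
    (hadd : ∀ x y : L, S.le (S.add (ρ x) (ρ y)) (ρ (x + y)))
    (hsmul : ∀ (α : F), α ≠ 0 → ∀ x : L, ρ (α • x) = S.smul α (ρ x))
    (hzeroρ : ρ 0 = zS) (l : List L) {a : L}
    (ha : a ∈ Submodule.span F {x | x ∈ l}) :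
    S.add (esum S zS ρ l) (S.z0 (ρ a)) = esum S zS ρ l := by
  induction ha using Submodule.span_induction with
  | mem x hx => exact esum_mem S zS hzero ρ l hx
  | zero =>
    rw [hzeroρ, idem_z0 S zS hzero (hzero zS)]
    exact add_zS S zS hzero _
  | add x y hx hy px py =>
    letI := StmtAux.mon S zS hzero
    have key : (S.z0 (ρ x) + S.z0 (ρ y)) + S.z0 (ρ (x + y)) = S.z0 (ρ x) + S.z0 (ρ y) :=
      z0_add_absorb S zS hzero ρ hadd x y
    have px' : esum S zS ρ l + S.z0 (ρ x) = esum S zS ρ l := px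
    have py' : esum S zS ρ l + S.z0 (ρ y) = esum S zS ρ l := py
    have h2 : esum S zS ρ l = esum S zS ρ l + S.z0 (ρ x) + S.z0 (ρ y) := by rw [px', py']
    show esum S zS ρ l + S.z0 (ρ (x + y)) = esum S zS ρ l
    calc esum S zS ρ l + S.z0 (ρ (x + y))
        = (esum S zS ρ l + S.z0 (ρ x) + S.z0 (ρ y)) + S.z0 (ρ (x + y)) := by rw [← h2]
    _ = esum S zS ρ l + ((S.z0 (ρ x) + S.z0 (ρ y)) + S.z0 (ρ (x + y))) := by abel
    _ = esum S zS ρ l + (S.z0 (ρ x) + S.z0 (ρ y)) := by rw [key]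
    _ = esum S zS ρ l + S.z0 (ρ x) + S.z0 (ρ y) := by abel
    _ = esum S zS ρ l := by rw [px', py']
  | smul α x hx px =>
    by_cases hα : α = 0
    · subst hα
      rw [zero_smul, hzeroρ, idem_z0 S zS hzero (hzero zS)]
      exact add_zS S zS hzero _
    · rw [hsmul α hα x, z0_smul S zS hzero]
      exact px

lemma esum_absorb_list (zS : T) (hzero : ∀ t : T, S.add zS t = t) (ρ : L → T)
    (hadd : ∀ x y : L, S.le (S.add (ρ x) (ρ y)) (ρ (x + y)))
    (hsmul : ∀ (α : F), α ≠ 0 → ∀ x : L, ρ (α • x) = S.smul α (ρ x))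
    (hzeroρ : ρ 0 = zS) (l m : List L)
    (h : ∀ a ∈ m, a ∈ Submodule.span F {x | x ∈ l}) :
    S.add (esum S zS ρ l) (esum S zS ρ m) = esum S zS ρ l := by
  induction m with
  | nil => exact add_zS S zS hzero _
  | cons b m ih =>
    letI := StmtAux.mon S zS hzero
    have hb : esum S zS ρ l + S.z0 (ρ b) = esum S zS ρ l :=
      esum_absorb S zS hzero ρ hadd hsmul hzeroρ l (h b List.mem_cons_self)
    have ih' : esum S zS ρ l + esum S zS ρ m = esum S zS ρ l :=
      ih (fun a ha => h a (List.mem_cons_of_mem _ ha))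
    show esum S zS ρ l + (S.z0 (ρ b) + esum S zS ρ m) = esum S zS ρ l
    calc esum S zS ρ l + (S.z0 (ρ b) + esum S zS ρ m)
        = (esum S zS ρ l + S.z0 (ρ b)) + esum S zS ρ m := by abel
    _ = esum S zS ρ l + esum S zS ρ m := by rw [hb]
    _ = esum S zS ρ l := ih'

lemma esum_span_eq (zS : T) (hzero : ∀ t : T, S.add zS t = t) (ρ : L → T)
    (hadd : ∀ x y : L, S.le (S.add (ρ x) (ρ y)) (ρ (x + y)))
    (hsmul : ∀ (α : F), α ≠ 0 → ∀ x : L, ρ (α • x) = S.smul α (ρ x))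
    (hzeroρ : ρ 0 = zS) (l m : List L)
    (h : Submodule.span F {x | x ∈ l} = Submodule.span F {x | x ∈ m}) :
    esum S zS ρ l = esum S zS ρ m := by
  have h1 := esum_absorb_list S zS hzero ρ hadd hsmul hzeroρ l m
    (fun a ha => by rw [h]; exact Submodule.subset_span ha)
  have h2 := esum_absorb_list S zS hzero ρ hadd hsmul hzeroρ m l
    (fun a ha => by rw [← h]; exact Submodule.subset_span ha)
  exact h1.symm.trans ((S.add_comm' _ _).trans h2)

end StmtAux
namespace StmtAux

variable {F : Type*} [Field F] {L : Type*} [LieRing L] [LieAlgebra F L]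

lemma ELext {u v : EL F L} (h1 : u.1.1 = v.1.1) (h2 : u.1.2 = v.1.2) : u = v :=
  Subtype.ext (Prod.ext h1 h2)

lemma exists_spanList (u : EL F L) :
    ∃ l : List L, Submodule.span F {x | x ∈ l} = u.1.1 := by
  haveI := u.2.1
  obtain ⟨s, hs⟩ := (Submodule.fg_iff_finiteDimensional u.1.1).mpr inferInstance
  refine ⟨s.toList, ?_⟩
  rw [show {x | x ∈ s.toList} = (s : Set L) from by ext x; simp]
  exact hs

noncomputable def spanList (u : EL F L) : List L := (exists_spanList u).choose

lemma spanList_spec (u : EL F L) :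
    Submodule.span F {x | x ∈ spanList u} = u.1.1 := (exists_spanList u).choose_spec

variable {T : Type*} (S : LieInvSemialgebra F T)

/-- The homomorphism `η : E(L) → S`. -/
noncomputable def etaF (zS : T) (ρ : L → T) (u : EL F L) : T :=
  S.add (ρ u.1.2) (esum S zS ρ (spanList u))

lemma etaF_eq (zS : T) (hzero : ∀ t : T, S.add zS t = t) (ρ : L → T)
    (hadd : ∀ x y : L, S.le (S.add (ρ x) (ρ y)) (ρ (x + y)))
    (hsmul : ∀ (α : F), α ≠ 0 → ∀ x : L, ρ (α • x) = S.smul α (ρ x))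
    (hzeroρ : ρ 0 = zS) (u : EL F L) (l : List L)
    (hl : Submodule.span F {x | x ∈ l} = u.1.1) :
    etaF S zS ρ u = S.add (ρ u.1.2) (esum S zS ρ l) := by
  unfold etaF
  rw [esum_span_eq S zS hzero ρ hadd hsmul hzeroρ (spanList u) l
    ((spanList_spec u).trans hl.symm)]

/-- Sum of the `E(L)`-idempotents `(F x, 0)`, `x ∈ l`. -/
def elsum (l : List L) : EL F L :=
  l.foldr (fun x w => EL.add (EL.z0 (tau x)) w) EL.zero

lemma elsum_fst (l : List L) :
    (elsum (F := F) l).1.1 = Submodule.span F {x | x ∈ l} := by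
  induction l with
  | nil =>
    rw [show {x | x ∈ ([] : List L)} = (∅ : Set L) from by ext x; simp,
      Submodule.span_empty]
    rfl
  | cons x l ih =>
    show (Submodule.span F {x} ⊔ Submodule.span F {x}) ⊔ (elsum (F := F) l).1.1 = _
    rw [sup_idem, ih, show {y | y ∈ x :: l} = {x} ∪ {y | y ∈ l} from by ext y; simp,
      Submodule.span_union]

lemma elsum_snd (l : List L) : (elsum (F := F) l).1.2 = 0 := by
  induction l with
  | nil => rfl
  | cons x l ih =>
    show x + -x + (elsum (F := F) l).1.2 = 0
    rw [ih]; simp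

lemma el_decomp (u : EL F L) (l : List L)
    (hl : Submodule.span F {x | x ∈ l} = u.1.1) :
    u = EL.add (tau u.1.2) (elsum l) := by
  refine ELext ?_ ?_
  · show u.1.1 = Submodule.span F {u.1.2} ⊔ (elsum (F := F) l).1.1
    rw [elsum_fst, hl]
    exact (sup_eq_right.mpr (Submodule.span_le.mpr
      (Set.singleton_subset_iff.mpr u.2.2))).symm
  · show u.1.2 = u.1.2 + (elsum (F := F) l).1.2
    rw [elsum_snd, add_zero]

lemma el_zero_eq_tau : (EL.zero : EL F L) = tau 0 :=
  ELext (Submodule.span_zero_singleton F).symm rfl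

lemma el_neg_eq_smul (u : EL F L) : EL.neg u = EL.smul (-1 : F) u :=
  ELext rfl (by show -u.1.2 = (-1 : F) • u.1.2; rw [neg_one_smul])

end StmtAux
open StmtAux

/-- If `S` is a semilattice of Lie algebras with zero and `ρ : L → S` is a
premorphism with `ρ(0) = 0`, then there is a unique homomorphism of Lie inverse
semialgebras `η : E(L) → S` with `η ∘ τ = ρ`. -/
theorem stmt_16 {F : Type*} [Field F] {L : Type*} [LieRing L] [LieAlgebra F L]
    {T : Type*} (S : LieInvSemialgebra F T)
    (zS : T) (hzero : ∀ t : T, S.add zS t = t)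
    (hsem : ∀ x y : T, S.z0 (S.br x y) = S.z0 (S.add x y))
    (ρ : L → T)
    (hadd : ∀ x y : L, S.le (S.add (ρ x) (ρ y)) (ρ (x + y)))
    (hbr : ∀ x y : L, S.le (S.br (ρ x) (ρ y)) (ρ ⁅x, y⁆))
    (hsmul : ∀ (α : F), α ≠ 0 → ∀ x : L, ρ (α • x) = S.smul α (ρ x))
    (hzeroρ : ρ 0 = zS) :
    ∃! η : EL F L → T,
      (∀ u v : EL F L, η (EL.add u v) = S.add (η u) (η v)) ∧
      (∀ (α : F), α ≠ 0 → ∀ u : EL F L, η (EL.smul α u) = S.smul α (η u)) ∧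
      (∀ u v : EL F L, η (EL.br u v) = S.br (η u) (η v)) ∧
      (∀ a : L, η (tau a) = ρ a) := by
  refine ⟨etaF S zS ρ, ⟨?_, ?_, ?_, ?_⟩, ?_⟩
  · -- additivity
    intro u v
    have hl : Submodule.span F {x | x ∈ spanList u ++ spanList v} = (EL.add u v).1.1 := by
      rw [show {x | x ∈ spanList u ++ spanList v}
          = {x | x ∈ spanList u} ∪ {x | x ∈ spanList (F := F) v} from by ext x; simp,
        Submodule.span_union, spanList_spec, spanList_spec]
      rfl
    rw [etaF_eq S zS hzero ρ hadd hsmul hzeroρ (EL.add u v) _ hl,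
      esum_append S zS hzero ρ]
    letI := mon S zS hzero
    have habs_u : esum S zS ρ (spanList u) + S.z0 (ρ u.1.2) = esum S zS ρ (spanList u) :=
      esum_absorb S zS hzero ρ hadd hsmul hzeroρ _ (by rw [spanList_spec]; exact u.2.2)
    have habs_v : esum S zS ρ (spanList v) + S.z0 (ρ v.1.2) = esum S zS ρ (spanList v) :=
      esum_absorb S zS hzero ρ hadd hsmul hzeroρ _ (by rw [spanList_spec]; exact v.2.2)
    have haddab : ρ u.1.2 + ρ v.1.2
        = ρ (u.1.2 + v.1.2) + (S.z0 (ρ u.1.2) + S.z0 (ρ v.1.2)) :=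
      hadd_unfold S zS hzero ρ hadd u.1.2 v.1.2
    show ρ (u.1.2 + v.1.2) + (esum S zS ρ (spanList u) + esum S zS ρ (spanList v))
        = (ρ u.1.2 + esum S zS ρ (spanList u)) + (ρ v.1.2 + esum S zS ρ (spanList v))
    refine Eq.symm ?_
    calc (ρ u.1.2 + esum S zS ρ (spanList u)) + (ρ v.1.2 + esum S zS ρ (spanList v))
        = (ρ u.1.2 + ρ v.1.2) + (esum S zS ρ (spanList u) + esum S zS ρ (spanList v)) := by
          abel
    _ = (ρ (u.1.2 + v.1.2) + (S.z0 (ρ u.1.2) + S.z0 (ρ v.1.2)))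
          + (esum S zS ρ (spanList u) + esum S zS ρ (spanList v)) := by rw [haddab]
    _ = ρ (u.1.2 + v.1.2) + ((esum S zS ρ (spanList u) + S.z0 (ρ u.1.2))
          + (esum S zS ρ (spanList v) + S.z0 (ρ v.1.2))) := by abel
    _ = ρ (u.1.2 + v.1.2) + (esum S zS ρ (spanList u) + esum S zS ρ (spanList v)) := by
          rw [habs_u, habs_v]
  · -- homogeneity
    intro α hα u
    have hl : Submodule.span F {x | x ∈ spanList u} = (EL.smul α u).1.1 := spanList_spec u
    rw [etaF_eq S zS hzero ρ hadd hsmul hzeroρ (EL.smul α u) _ hl]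
    show S.add (ρ (α • u.1.2)) (esum S zS ρ (spanList u))
        = S.smul α (S.add (ρ u.1.2) (esum S zS ρ (spanList u)))
    rw [hsmul α hα, S.smul_add', smul_esum S zS hzero ρ α]
  · -- bracket
    intro u v
    have hl : Submodule.span F
        {x | x ∈ spanList u ++ (spanList v ++ [⁅u.1.2, v.1.2⁆])} = (EL.br u v).1.1 := by
      rw [show {x | x ∈ spanList u ++ (spanList v ++ [⁅u.1.2, v.1.2⁆])}
          = {x | x ∈ spanList u} ∪ ({x | x ∈ spanList (F := F) v} ∪ {⁅u.1.2, v.1.2⁆})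
          from by ext x; constructor <;> (intro h; simp at h ⊢; tauto),
        Submodule.span_union, Submodule.span_union, spanList_spec, spanList_spec,
        ← sup_assoc]
      rfl
    rw [etaF_eq S zS hzero ρ hadd hsmul hzeroρ (EL.br u v) _ hl,
      esum_append S zS hzero ρ, esum_append S zS hzero ρ]
    letI := mon S zS hzero
    have hexp : S.br (ρ u.1.2 + esum S zS ρ (spanList u)) (ρ v.1.2 + esum S zS ρ (spanList v))
        = ((S.br (ρ u.1.2) (ρ v.1.2) + S.z0 (ρ u.1.2)) + S.z0 (ρ v.1.2))
          + (esum S zS ρ (spanList u) + esum S zS ρ (spanList v)) :=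
      br_expand S zS hzero hsem (ρ u.1.2) (ρ v.1.2)
        (esum_idem S zS hzero ρ _) (esum_idem S zS hzero ρ _)
    have hb : S.br (ρ u.1.2) (ρ v.1.2)
        = ρ ⁅u.1.2, v.1.2⁆ + (S.z0 (ρ u.1.2) + S.z0 (ρ v.1.2)) :=
      hbr_unfold S zS hzero hsem ρ hbr u.1.2 v.1.2
    have habs_u : esum S zS ρ (spanList u) + S.z0 (ρ u.1.2) = esum S zS ρ (spanList u) :=
      esum_absorb S zS hzero ρ hadd hsmul hzeroρ _ (by rw [spanList_spec]; exact u.2.2)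
    have habs_v : esum S zS ρ (spanList v) + S.z0 (ρ v.1.2) = esum S zS ρ (spanList v) :=
      esum_absorb S zS hzero ρ hadd hsmul hzeroρ _ (by rw [spanList_spec]; exact v.2.2)
    have hzabs : (S.z0 (ρ u.1.2) + S.z0 (ρ v.1.2)) + S.z0 (ρ ⁅u.1.2, v.1.2⁆)
        = S.z0 (ρ u.1.2) + S.z0 (ρ v.1.2) :=
      z0_br_absorb S zS hzero hsem ρ hbr u.1.2 v.1.2
    have hia : S.z0 (ρ u.1.2) + S.z0 (ρ u.1.2) = S.z0 (ρ u.1.2) := z0_idem S zS hzero _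
    have hib : S.z0 (ρ v.1.2) + S.z0 (ρ v.1.2) = S.z0 (ρ v.1.2) := z0_idem S zS hzero _
    have hzS1 : S.z0 (ρ ⁅u.1.2, v.1.2⁆) + zS = S.z0 (ρ ⁅u.1.2, v.1.2⁆) :=
      add_zS S zS hzero _
    show ρ ⁅u.1.2, v.1.2⁆ + (esum S zS ρ (spanList u) + (esum S zS ρ (spanList v)
          + (S.z0 (ρ ⁅u.1.2, v.1.2⁆) + zS)))
        = S.br (ρ u.1.2 + esum S zS ρ (spanList u)) (ρ v.1.2 + esum S zS ρ (spanList v))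
    calc ρ ⁅u.1.2, v.1.2⁆ + (esum S zS ρ (spanList u) + (esum S zS ρ (spanList v)
          + (S.z0 (ρ ⁅u.1.2, v.1.2⁆) + zS)))
        = ρ ⁅u.1.2, v.1.2⁆ + (esum S zS ρ (spanList u) + (esum S zS ρ (spanList v)
          + S.z0 (ρ ⁅u.1.2, v.1.2⁆))) := by rw [hzS1]
    _ = ρ ⁅u.1.2, v.1.2⁆ + ((esum S zS ρ (spanList u) + S.z0 (ρ u.1.2))
          + ((esum S zS ρ (spanList v) + S.z0 (ρ v.1.2)) + S.z0 (ρ ⁅u.1.2, v.1.2⁆))) := by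
        rw [habs_u, habs_v]
    _ = ρ ⁅u.1.2, v.1.2⁆ + ((esum S zS ρ (spanList u) + esum S zS ρ (spanList v))
          + ((S.z0 (ρ u.1.2) + S.z0 (ρ v.1.2)) + S.z0 (ρ ⁅u.1.2, v.1.2⁆))) := by abel
    _ = ρ ⁅u.1.2, v.1.2⁆ + ((esum S zS ρ (spanList u) + esum S zS ρ (spanList v))
          + (S.z0 (ρ u.1.2) + S.z0 (ρ v.1.2))) := by rw [hzabs]
    _ = ρ ⁅u.1.2, v.1.2⁆ + ((S.z0 (ρ u.1.2) + S.z0 (ρ u.1.2))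
          + ((S.z0 (ρ v.1.2) + S.z0 (ρ v.1.2))
          + (esum S zS ρ (spanList u) + esum S zS ρ (spanList v)))) := by
        rw [hia, hib]; abel
    _ = (((ρ ⁅u.1.2, v.1.2⁆ + (S.z0 (ρ u.1.2) + S.z0 (ρ v.1.2))) + S.z0 (ρ u.1.2))
          + S.z0 (ρ v.1.2))
          + (esum S zS ρ (spanList u) + esum S zS ρ (spanList v)) := by abel
    _ = ((S.br (ρ u.1.2) (ρ v.1.2) + S.z0 (ρ u.1.2)) + S.z0 (ρ v.1.2))
          + (esum S zS ρ (spanList u) + esum S zS ρ (spanList v)) := by rw [← hb]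
    _ = S.br (ρ u.1.2 + esum S zS ρ (spanList u)) (ρ v.1.2 + esum S zS ρ (spanList v)) :=
        hexp.symm
  · -- composition with τ
    intro a
    have hl : Submodule.span F {x | x ∈ [a]} = (tau a).1.1 := by
      rw [show {x | x ∈ [a]} = ({a} : Set L) from by ext x; simp]
      rfl
    rw [etaF_eq S zS hzero ρ hadd hsmul hzeroρ (tau a) [a] hl]
    letI := mon S zS hzero
    have h1 : S.z0 (ρ a) + zS = S.z0 (ρ a) := add_zS S zS hzero _
    have h2 : ρ a + S.z0 (ρ a) = ρ a := add_z0 S zS hzero _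
    show ρ a + (S.z0 (ρ a) + zS) = ρ a
    rw [h1, h2]
  · -- uniqueness
    rintro η' ⟨e1, e2, e3, e4⟩
    funext u
    have η'zero : η' EL.zero = zS := by rw [el_zero_eq_tau, e4, hzeroρ]
    have η'z0 : ∀ x : L, η' (EL.z0 (tau x)) = S.z0 (ρ x) := by
      intro x
      show η' (EL.add (tau x) (EL.neg (tau x))) = _
      rw [e1, el_neg_eq_smul, e2 (-1) (neg_ne_zero.mpr one_ne_zero), e4,
        smul_neg_one S zS hzero]
      rfl
    have η'elsum : ∀ l : List L, η' (elsum l) = esum S zS ρ l := by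
      intro l
      induction l with
      | nil => exact η'zero
      | cons x l ih =>
        show η' (EL.add (EL.z0 (tau x)) (elsum l)) = _
        rw [e1, η'z0, ih]
        rfl
    have hd : u = EL.add (tau u.1.2) (elsum (spanList u)) :=
      el_decomp u _ (spanList_spec u)
    conv_lhs => rw [hd]
    rw [e1, e4, η'elsum]
    rfl
end

section
/- Let G be a group and Λ a meet semilattice with greatest element ε. Let π : G → (Λ → Λ) be a map such that each π_g preserves meets, i.e. π_g(λ ∧ μ) = π_g(λ) ∧ π_g(μ) for all λ, μ ∈ Λ. Then π is a unital partial representation of G in Λ if and only if π_1 is the identity map on Λ and π_g(π_h(λ)) = π_g(ε) ∧ π_{gh}(λ) for all g, h ∈ G and λ ∈ Λ. -/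
/-- A unital partial representation of a group `G` in a meet semilattice `Λ` with
greatest element `⊤`: each `π g` preserves meets, the image of each `π g` is a
unital ideal of `Λ`, `π 1 = id`, and the partial-representation identities hold. -/
def IsUnitalPartialRep {G Λ : Type*} [Group G] [SemilatticeInf Λ] [OrderTop Λ]
    (π : G → Λ → Λ) : Prop :=
  (∀ g : G,
    (∀ lam ∈ Set.range (π g), ∀ μ : Λ, lam ⊓ μ ∈ Set.range (π g)) ∧
    (∃ u ∈ Set.range (π g), ∀ lam ∈ Set.range (π g), lam ≤ u)) ∧
  (∀ lam : Λ, π 1 lam = lam) ∧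
  (∀ (g h : G) (lam : Λ), π g⁻¹ (π g (π h lam)) = π g⁻¹ (π (g * h) lam)) ∧
  (∀ (g h : G) (lam : Λ), π g (π h (π h⁻¹ lam)) = π (g * h) (π h⁻¹ lam))

/-- A meet-preserving map `π : G → (Λ → Λ)` is a unital partial representation iff
`π 1 = id` and `π g (π h lam) = π g ⊤ ⊓ π (gh) lam` for all `g, h, lam`. -/
theorem stmt_17 {G Λ : Type*} [Group G] [SemilatticeInf Λ] [OrderTop Λ]
    (π : G → Λ → Λ)
    (hmeet : ∀ (g : G) (lam μ : Λ), π g (lam ⊓ μ) = π g lam ⊓ π g μ) :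
    IsUnitalPartialRep π ↔
      ((∀ lam : Λ, π 1 lam = lam) ∧
        ∀ (g h : G) (lam : Λ), π g (π h lam) = π g ⊤ ⊓ π (g * h) lam) := by
  have hmono : ∀ (g : G) {a b : Λ}, a ≤ b → π g a ≤ π g b := by
    intro g a b hab
    have h1 : a ⊓ b = a := inf_eq_left.mpr hab
    calc π g a = π g (a ⊓ b) := by rw [h1]
      _ = π g a ⊓ π g b := hmeet g a b
      _ ≤ π g b := inf_le_right
  have hle : ∀ (g : G) (a : Λ), π g a ≤ π g ⊤ := fun g a => hmono g le_top
  constructor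
  · rintro ⟨hideal, hone, h3, h4⟩
    refine ⟨hone, ?_⟩
    -- E : π g (π g⁻¹ (π g a)) = π g a
    have hE : ∀ (g : G) (a : Λ), π g (π g⁻¹ (π g a)) = π g a := by
      intro g a
      have := h4 g g⁻¹ a
      simpa [hone] using this
    -- F : π g (π g⁻¹ lam) = π g ⊤ ⊓ lam
    have hF : ∀ (g : G) (lam : Λ), π g (π g⁻¹ lam) = π g ⊤ ⊓ lam := by
      intro g lam
      obtain ⟨μ, hμ⟩ : π g ⊤ ⊓ lam ∈ Set.range (π g) :=
        (hideal g).1 (π g ⊤) ⟨⊤, rfl⟩ lam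
      have step1 : π g (π g⁻¹ (π g ⊤ ⊓ lam)) = π g ⊤ ⊓ lam := by
        rw [← hμ, hE]
      have hE' : π g⁻¹ (π g (π g⁻¹ lam)) = π g⁻¹ lam := by
        have := hE g⁻¹ lam
        simpa using this
      have hle2 : π g⁻¹ lam ≤ π g⁻¹ (π g ⊤) := by
        calc π g⁻¹ lam = π g⁻¹ (π g (π g⁻¹ lam)) := hE'.symm
          _ ≤ π g⁻¹ (π g ⊤) := hmono g⁻¹ (hle g _)
      have step2 : π g⁻¹ (π g ⊤ ⊓ lam) = π g⁻¹ lam := by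
        rw [hmeet, inf_eq_right.mpr hle2]
      rw [← step2, step1]
    intro g h lam
    calc π g (π h lam) = π g (π g⁻¹ (π g (π h lam))) := (hE g (π h lam)).symm
      _ = π g (π g⁻¹ (π (g * h) lam)) := by rw [h3]
      _ = π g ⊤ ⊓ π (g * h) lam := hF g _
  · rintro ⟨hone, hf⟩
    have hle' : ∀ (g : G) (a : Λ), π g a ≤ π g ⊤ := by
      intro g a
      have := hf g 1 a
      rw [hone, mul_one] at this
      rw [this]; exact inf_le_left
    refine ⟨?_, hone, ?_, ?_⟩
    · intro g
      refine ⟨?_, ⟨π g ⊤, ⟨⊤, rfl⟩, ?_⟩⟩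
      · rintro lam ⟨a, rfl⟩ μ
        refine ⟨a ⊓ π g⁻¹ μ, ?_⟩
        have h1 : π g (π g⁻¹ μ) = π g ⊤ ⊓ μ := by
          have := hf g g⁻¹ μ
          rwa [mul_inv_cancel, hone] at this
        rw [hmeet, h1, ← inf_assoc, inf_eq_left.mpr (hle' g a)]
      · rintro lam ⟨a, rfl⟩
        exact hle' g a
    · intro g h lam
      have h1 := hf g⁻¹ g (π h lam)
      have h2 := hf g⁻¹ (g * h) lam
      rw [inv_mul_cancel, hone] at h1
      rw [inv_mul_cancel_left] at h2
      rw [h1, h2]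
    · intro g h lam
      have h1 := hf h h⁻¹ lam
      rw [mul_inv_cancel, hone] at h1
      have h2 := hf (g * h) h⁻¹ lam
      rw [mul_inv_cancel_right] at h2
      rw [h1, hmeet, hf g h ⊤, h2]
      rw [inf_assoc, inf_comm (π (g * h) ⊤), ← inf_assoc,
        inf_eq_right.mpr (hle' g lam)]
end

section
/- Let · be a partial representation of an F-vector space V in a meet semilattice Λ with greatest element ε, where char F ≠ 2. Then for all a, b ∈ V and λ, μ ∈ Λ: (1) a·(a·λ) = a·λ; (2) a·λ ∧ a·μ = a·(λ∧μ) = λ ∧ a·μ; (3) a·ε ∧ (a+b)·λ = b·ε ∧ (a+b)·λ; (4) a·λ ≤ λ; (5) if λ ≤ μ then a·λ ≤ a·μ; in particular a·λ ≤ a·ε; (6) λ ≤ a·ε if and only if a·λ = λ. -/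
/-- Elementary properties of a partial representation of an `F`-vector space `V`
(char `F ≠ 2`) in a meet semilattice `Λ` with greatest element `⊤`. -/
theorem stmt_18 {F : Type*} [Field F] (hF : ringChar F ≠ 2)
    {V : Type*} [AddCommGroup V] [Module F V]
    {Λ : Type*} [SemilatticeInf Λ] [OrderTop Λ]
    (act : V → Λ → Λ)
    (h1 : ∀ lam : Λ, act 0 lam = lam)
    (h2 : ∀ (a : V) (lam μ : Λ), act a (lam ⊓ μ) = act a lam ⊓ act a μ)
    (h3 : ∀ (a b : V) (lam : Λ), act a (act b lam) = act a ⊤ ⊓ act (a + b) lam)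
    (h4 : ∀ (α : F), α ≠ 0 → ∀ (a : V) (lam : Λ), act (α • a) lam = act a lam) :
    -- (1)
    (∀ (a : V) (lam : Λ), act a (act a lam) = act a lam) ∧
    -- (2)
    (∀ (a : V) (lam μ : Λ),
      act a lam ⊓ act a μ = act a lam ⊓ μ ∧ act a lam ⊓ μ = lam ⊓ act a μ) ∧
    -- (3)
    (∀ (a b : V) (lam : Λ),
      act a ⊤ ⊓ act (a + b) lam = act b ⊤ ⊓ act (a + b) lam) ∧
    -- (4)
    (∀ (a : V) (lam : Λ), act a lam ≤ lam) ∧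
    -- (5)
    (∀ (a : V) (lam μ : Λ), lam ≤ μ → act a lam ≤ act a μ) ∧
    (∀ (a : V) (lam : Λ), act a lam ≤ act a ⊤) ∧
    -- (6)
    (∀ (a : V) (lam : Λ), lam ≤ act a ⊤ ↔ act a lam = lam) := by
  have htwo : (2 : F) ≠ 0 := Ring.two_ne_zero hF
  have hneg : ∀ (a : V) (lam : Λ), act (-a) lam = act a lam := by
    intro a lam
    have := h4 (-1) (by norm_num) a lam
    rwa [neg_one_smul] at this
  -- idempotence (1)
  have hid : ∀ (a : V) (lam : Λ), act a (act a lam) = act a lam := by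
    intro a lam
    have h2a : act (a + a) lam = act a lam := by
      have := h4 (2) htwo a lam
      rwa [two_smul] at this
    have hle : act a lam ≤ act a ⊤ := by
      have : act a (lam ⊓ ⊤) = act a lam ⊓ act a ⊤ := h2 a lam ⊤
      rw [inf_top_eq] at this
      rw [this]; exact inf_le_right
    rw [h3 a a lam, h2a, inf_eq_right.mpr hle]
  -- key identity
  have key : ∀ (a : V) (lam : Λ), act a lam = lam ⊓ act a ⊤ := by
    intro a lam
    have := h3 (-a) a lam
    rw [hneg, hneg, neg_add_cancel, h1, hid] at this
    rw [this, inf_comm]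
  refine ⟨hid, ?_, ?_, ?_, ?_, ?_, ?_⟩
  · intro a lam μ
    constructor
    · rw [key a lam, key a μ]
      rw [← inf_assoc, inf_right_comm (lam ⊓ act a ⊤), inf_right_idem]
    · rw [key a lam, key a μ]
      rw [inf_assoc, inf_comm (act a ⊤) μ, ← inf_assoc]
  · intro a b lam
    rw [← h3 a b lam,
      ← show act b (act a lam) = act b ⊤ ⊓ act (a + b) lam from by
        rw [h3 b a lam, add_comm],
      key a (act b lam), key b (act a lam), key b lam, key a lam,
      inf_assoc, inf_assoc, inf_comm (act b ⊤)]
  · intro a lam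
    rw [key]; exact inf_le_left
  · intro a lam μ h
    rw [key a lam, key a μ]
    exact inf_le_inf_right _ h
  · intro a lam
    rw [key]; exact inf_le_right
  · intro a lam
    rw [key a lam]
    exact ⟨fun h => inf_eq_left.mpr h, fun h => inf_eq_left.mp h⟩
end

section
/- Let · be a partial representation of an F-vector space V in a meet semilattice Λ with greatest element ε, where char F ≠ 2. Let A be a finite-dimensional subspace of V with finite spanning set {x₁, …, x_k}. Then: (1) x₁·(x₂·(⋯(x_k·ε)⋯)) = x₁·ε ∧ ⋯ ∧ x_k·ε; (2) if a ∈ A then x₁·(x₂·(⋯(x_k·ε)⋯)) = a·ε ∧ x₁·ε ∧ ⋯ ∧ x_k·ε = a·(x₁·(x₂·(⋯(x_k·ε)⋯))); (3) m_A := x₁·ε ∧ ⋯ ∧ x_k·ε is the infimum of the set {a·ε : a ∈ A}: m_A ≤ a·ε for all a ∈ A, and any d ∈ Λ with d ≤ a·ε for all a ∈ A satisfies d ≤ m_A; (4) for another finite-dimensional subspace B with finite spanning set {y₁,…,y_l} and m_B := y₁·ε ∧ ⋯ ∧ y_l·ε, the element m_A ∧ m_B is the infimum of {c·ε : c ∈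 A+B}; (5) for any a ∈ V, a·m_A = a·ε ∧ m_A, and this element is the infimum of {x·ε : x ∈ A + F·a}. -/
/-- Iterated action `x₁·(x₂·(⋯(x_k·⊤)⋯))` of a family on the greatest element. -/
def iterAct {V Λ : Type*} [SemilatticeInf Λ] [OrderTop Λ] (act : V → Λ → Λ) :
    {n : ℕ} → (Fin (n + 1) → V) → Λ
  | 0, x => act (x 0) ⊤
  | _ + 1, x => act (x 0) (iterAct act fun i => x i.succ)

set_option linter.unusedSectionVars false

section Aux

variable {F : Type*} [Field F] {V : Type*} [AddCommGroup V] [Module F V]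
  {Λ : Type*} [SemilatticeInf Λ] [OrderTop Λ] (act : V → Λ → Λ)

theorem auxMono (h2 : ∀ (a : V) (lam μ : Λ), act a (lam ⊓ μ) = act a lam ⊓ act a μ)
    (a : V) {lam μ : Λ} (h : lam ≤ μ) : act a lam ≤ act a μ := by
  have hl : lam ⊓ μ = lam := inf_eq_left.mpr h
  calc act a lam = act a lam ⊓ act a μ := by rw [← h2, hl]
    _ ≤ act a μ := inf_le_right

theorem auxLeTop (h2 : ∀ (a : V) (lam μ : Λ), act a (lam ⊓ μ) = act a lam ⊓ act a μ)
    (a : V) (lam : Λ) : act a lam ≤ act a ⊤ := auxMono act h2 a le_top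

theorem auxIdem (hF : ringChar F ≠ 2)
    (h2 : ∀ (a : V) (lam μ : Λ), act a (lam ⊓ μ) = act a lam ⊓ act a μ)
    (h3 : ∀ (a b : V) (lam : Λ), act a (act b lam) = act a ⊤ ⊓ act (a + b) lam)
    (h4 : ∀ (α : F), α ≠ 0 → ∀ (a : V) (lam : Λ), act (α • a) lam = act a lam)
    (a : V) (lam : Λ) : act a (act a lam) = act a lam := by
  have h2' : (2 : F) ≠ 0 := Ring.two_ne_zero hF
  have haa : a + a = (2 : F) • a := (two_smul F a).symm
  rw [h3, haa, h4 2 h2']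
  exact inf_eq_right.mpr (auxLeTop act h2 a lam)

/-- Key symmetry lemma: `a·⊤ ⊓ b·⊤ = b·⊤ ⊓ (a+b)·⊤`. -/
theorem auxS (hF : ringChar F ≠ 2)
    (h2 : ∀ (a : V) (lam μ : Λ), act a (lam ⊓ μ) = act a lam ⊓ act a μ)
    (h3 : ∀ (a b : V) (lam : Λ), act a (act b lam) = act a ⊤ ⊓ act (a + b) lam)
    (h4 : ∀ (α : F), α ≠ 0 → ∀ (a : V) (lam : Λ), act (α • a) lam = act a lam)
    (a b : V) : act a ⊤ ⊓ act b ⊤ = act b ⊤ ⊓ act (a + b) ⊤ := by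
  have hab : b + (a - b) = a := by abel
  have e1 : act b (act (a - b) ⊤) = act b ⊤ ⊓ act a ⊤ := by rw [h3, hab]
  calc act a ⊤ ⊓ act b ⊤ = act b (act (a - b) ⊤) := by rw [e1, inf_comm]
    _ = act b (act b (act (a - b) ⊤)) := (auxIdem act hF h2 h3 h4 b _).symm
    _ = act b (act b ⊤ ⊓ act a ⊤) := by rw [e1]
    _ = act b (act b ⊤) ⊓ act b (act a ⊤) := h2 b _ _
    _ = act b ⊤ ⊓ (act b ⊤ ⊓ act (b + a) ⊤) := by
        rw [auxIdem act hF h2 h3 h4 b ⊤, h3]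
    _ = act b ⊤ ⊓ act (a + b) ⊤ := by rw [← inf_assoc, inf_idem, add_comm b a]

theorem auxAdd (hF : ringChar F ≠ 2)
    (h2 : ∀ (a : V) (lam μ : Λ), act a (lam ⊓ μ) = act a lam ⊓ act a μ)
    (h3 : ∀ (a b : V) (lam : Λ), act a (act b lam) = act a ⊤ ⊓ act (a + b) lam)
    (h4 : ∀ (α : F), α ≠ 0 → ∀ (a : V) (lam : Λ), act (α • a) lam = act a lam)
    (a b : V) : act a ⊤ ⊓ act b ⊤ ≤ act (a + b) ⊤ := by
  rw [auxS act hF h2 h3 h4 a b]; exact inf_le_right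

theorem auxActTop (hF : ringChar F ≠ 2)
    (h2 : ∀ (a : V) (lam μ : Λ), act a (lam ⊓ μ) = act a lam ⊓ act a μ)
    (h3 : ∀ (a b : V) (lam : Λ), act a (act b lam) = act a ⊤ ⊓ act (a + b) lam)
    (h4 : ∀ (α : F), α ≠ 0 → ∀ (a : V) (lam : Λ), act (α • a) lam = act a lam)
    (a b : V) : act a (act b ⊤) = act a ⊤ ⊓ act b ⊤ := by
  rw [h3, add_comm a b, ← auxS act hF h2 h3 h4 b a, inf_comm]

/-- The master lemma: `a · (⨅ᵢ bᵢ·⊤) = a·⊤ ⊓ ⨅ᵢ bᵢ·⊤`. -/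
theorem auxActInf (hF : ringChar F ≠ 2)
    (h2 : ∀ (a : V) (lam μ : Λ), act a (lam ⊓ μ) = act a lam ⊓ act a μ)
    (h3 : ∀ (a b : V) (lam : Λ), act a (act b lam) = act a ⊤ ⊓ act (a + b) lam)
    (h4 : ∀ (α : F), α ≠ 0 → ∀ (a : V) (lam : Λ), act (α • a) lam = act a lam)
    {ι : Type*} (s : Finset ι) (hs : s.Nonempty) (g : ι → V) (a : V) :
    act a (s.inf' hs fun i => act (g i) ⊤) =
      act a ⊤ ⊓ s.inf' hs fun i => act (g i) ⊤ := by
  induction hs using Finset.Nonempty.cons_induction with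
  | singleton i => simp [auxActTop act hF h2 h3 h4 a (g i)]
  | cons i t hi ht ih =>
      rw [Finset.inf'_cons, h2, ih, auxActTop act hF h2 h3 h4 a (g i), ← inf_assoc,
        inf_right_comm (act a ⊤) (act (g i) ⊤) (act a ⊤), inf_idem, inf_assoc]

theorem auxSpanLB (hF : ringChar F ≠ 2)
    (h1 : ∀ lam : Λ, act 0 lam = lam)
    (h2 : ∀ (a : V) (lam μ : Λ), act a (lam ⊓ μ) = act a lam ⊓ act a μ)
    (h3 : ∀ (a b : V) (lam : Λ), act a (act b lam) = act a ⊤ ⊓ act (a + b) lam)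
    (h4 : ∀ (α : F), α ≠ 0 → ∀ (a : V) (lam : Λ), act (α • a) lam = act a lam)
    (m : Λ) (s : Set V) (hm : ∀ v ∈ s, m ≤ act v ⊤) :
    ∀ a ∈ Submodule.span F s, m ≤ act a ⊤ := by
  intro a ha
  induction ha using Submodule.span_induction with
  | mem v hv => exact hm v hv
  | zero => rw [h1]; exact le_top
  | add u v _ _ hu hv =>
      exact (le_inf hu hv).trans (auxAdd act hF h2 h3 h4 u v)
  | smul α v _ hv =>
      rcases eq_or_ne α 0 with rfl | hα
      · rw [zero_smul, h1]; exact le_top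
      · rw [h4 α hα]; exact hv

end Aux

/-- Infimum properties of the iterated action of a spanning set under a partial
representation of an `F`-vector space `V` (char `F ≠ 2`) in a meet semilattice with
greatest element `⊤`. -/
theorem stmt_19 {F : Type*} [Field F] (hF : ringChar F ≠ 2)
    {V : Type*} [AddCommGroup V] [Module F V]
    {Λ : Type*} [SemilatticeInf Λ] [OrderTop Λ]
    (act : V → Λ → Λ)
    (h1 : ∀ lam : Λ, act 0 lam = lam)
    (h2 : ∀ (a : V) (lam μ : Λ), act a (lam ⊓ μ) = act a lam ⊓ act a μ)
    (h3 : ∀ (a b : V) (lam : Λ), act a (act b lam) = act a ⊤ ⊓ act (a + b) lam)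
    (h4 : ∀ (α : F), α ≠ 0 → ∀ (a : V) (lam : Λ), act (α • a) lam = act a lam)
    (A : Submodule F V) (k : ℕ) (x : Fin (k + 1) → V)
    (hA : Submodule.span F (Set.range x) = A) :
    -- (1)
    (iterAct act x =
      Finset.univ.inf' Finset.univ_nonempty fun i => act (x i) ⊤) ∧
    -- (2)
    (∀ a ∈ A,
      iterAct act x =
        act a ⊤ ⊓ Finset.univ.inf' Finset.univ_nonempty (fun i => act (x i) ⊤) ∧
      iterAct act x = act a (iterAct act x)) ∧
    -- (3) `m_A` is the infimum of `{a·⊤ : a ∈ A}`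
    (∀ a ∈ A,
      (Finset.univ.inf' Finset.univ_nonempty fun i => act (x i) ⊤) ≤ act a ⊤) ∧
    (∀ d : Λ, (∀ a ∈ A, d ≤ act a ⊤) →
      d ≤ Finset.univ.inf' Finset.univ_nonempty fun i => act (x i) ⊤) ∧
    -- (4) `m_A ⊓ m_B` is the infimum of `{c·⊤ : c ∈ A + B}`
    (∀ (B : Submodule F V) (l : ℕ) (y : Fin (l + 1) → V),
      Submodule.span F (Set.range y) = B →
      (∀ c ∈ A ⊔ B,
        (Finset.univ.inf' Finset.univ_nonempty fun i => act (x i) ⊤) ⊓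
          (Finset.univ.inf' Finset.univ_nonempty fun j => act (y j) ⊤) ≤ act c ⊤) ∧
      (∀ d : Λ, (∀ c ∈ A ⊔ B, d ≤ act c ⊤) →
        d ≤ (Finset.univ.inf' Finset.univ_nonempty fun i => act (x i) ⊤) ⊓
          (Finset.univ.inf' Finset.univ_nonempty fun j => act (y j) ⊤))) ∧
    -- (5)
    (∀ a : V,
      act a (Finset.univ.inf' Finset.univ_nonempty fun i => act (x i) ⊤) =
        act a ⊤ ⊓ (Finset.univ.inf' Finset.univ_nonempty fun i => act (x i) ⊤) ∧
      (∀ w ∈ A ⊔ Submodule.span F {a},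
        act a (Finset.univ.inf' Finset.univ_nonempty fun i => act (x i) ⊤) ≤ act w ⊤) ∧
      (∀ d : Λ, (∀ w ∈ A ⊔ Submodule.span F {a}, d ≤ act w ⊤) →
        d ≤ act a (Finset.univ.inf' Finset.univ_nonempty fun i => act (x i) ⊤))) := by
  -- generic lower bound lemma specialized to a spanning family
  have lbGen : ∀ (n : ℕ) (z : Fin (n + 1) → V), ∀ a ∈ Submodule.span F (Set.range z),
      (Finset.univ.inf' Finset.univ_nonempty fun i => act (z i) ⊤) ≤ act a ⊤ := by
    intro n z a ha
    refine auxSpanLB act hF h1 h2 h3 h4 _ _ ?_ a ha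
    rintro v ⟨i, rfl⟩
    exact Finset.inf'_le _ (Finset.mem_univ i)
  -- (1)
  have part1 : ∀ (n : ℕ) (z : Fin (n + 1) → V),
      iterAct act z = Finset.univ.inf' Finset.univ_nonempty fun i => act (z i) ⊤ := by
    intro n
    induction n with
    | zero =>
        intro z
        simp [iterAct]
    | succ m ih =>
        intro z
        have tail := ih fun i => z i.succ
        have split : (Finset.univ.inf' Finset.univ_nonempty fun i => act (z i) ⊤) =
            act (z 0) ⊤ ⊓ Finset.univ.inf' Finset.univ_nonempty
              (fun i : Fin (m + 1) => act (z i.succ) ⊤) := by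
          apply le_antisymm
          · refine le_inf (Finset.inf'_le _ (Finset.mem_univ 0)) ?_
            exact Finset.le_inf' _ _ fun i _ => Finset.inf'_le _ (Finset.mem_univ i.succ)
          · refine Finset.le_inf' _ _ fun i _ => ?_
            induction i using Fin.cases with
            | zero => exact inf_le_left
            | succ j => exact inf_le_right.trans (Finset.inf'_le _ (Finset.mem_univ j))
        rw [show iterAct act z = act (z 0) (iterAct act fun i => z i.succ) from rfl, tail,
          auxActInf act hF h2 h3 h4 _ _ _ _, split]
  have h1' := part1 k x
  have lbA : ∀ a ∈ A, (Finset.univ.inf' Finset.univ_nonempty fun i => act (x i) ⊤) ≤ act a ⊤ := by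
    intro a ha
    exact lbGen k x a (hA ▸ ha)
  have memA : ∀ i, x i ∈ A := fun i => hA ▸ Submodule.subset_span ⟨i, rfl⟩
  refine ⟨h1', ?_, lbA, ?_, ?_, ?_⟩
  · -- (2)
    intro a ha
    have hle := lbA a ha
    constructor
    · rw [h1', inf_eq_right.mpr hle]
    · rw [h1', auxActInf act hF h2 h3 h4 _ _ _ _, inf_eq_right.mpr hle]
  · -- (3) glb
    intro d hd
    exact Finset.le_inf' _ _ fun i _ => hd (x i) (memA i)
  · -- (4)
    intro B l y hB
    have lbB : ∀ b ∈ B,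
        (Finset.univ.inf' Finset.univ_nonempty fun j => act (y j) ⊤) ≤ act b ⊤ := by
      intro b hb; exact lbGen l y b (hB ▸ hb)
    have memB : ∀ j, y j ∈ B := fun j => hB ▸ Submodule.subset_span ⟨j, rfl⟩
    constructor
    · intro c hc
      rcases Submodule.mem_sup.mp hc with ⟨u, hu, v, hv, rfl⟩
      calc _ ≤ act u ⊤ ⊓ act v ⊤ := inf_le_inf (lbA u hu) (lbB v hv)
        _ ≤ act (u + v) ⊤ := auxAdd act hF h2 h3 h4 u v
    · intro d hd
      refine le_inf ?_ ?_
      · exact Finset.le_inf' _ _ fun i _ => hd (x i) (Submodule.mem_sup_left (memA i))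
      · exact Finset.le_inf' _ _ fun j _ => hd (y j) (Submodule.mem_sup_right (memB j))
  · -- (5)
    intro a
    have hM := auxActInf act hF h2 h3 h4 (Finset.univ) Finset.univ_nonempty (fun i => x i) a
    refine ⟨hM, ?_, ?_⟩
    · intro w hw
      rw [hM]
      rcases Submodule.mem_sup.mp hw with ⟨u, hu, v, hv, rfl⟩
      rcases Submodule.mem_span_singleton.mp hv with ⟨α, rfl⟩
      rcases eq_or_ne α 0 with rfl | hα
      · rw [zero_smul, add_zero]
        exact inf_le_right.trans (lbA u hu)
      · calc act a ⊤ ⊓ _ ≤ act a ⊤ ⊓ act u ⊤ := inf_le_inf le_rfl (lbA u hu)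
          _ = act (α • a) ⊤ ⊓ act u ⊤ := by rw [h4 α hα]
          _ ≤ act (α • a + u) ⊤ := auxAdd act hF h2 h3 h4 _ _
          _ = act (u + α • a) ⊤ := by rw [add_comm]
    · intro d hd
      rw [hM]
      refine le_inf ?_ ?_
      · exact hd a (Submodule.mem_sup_right (Submodule.mem_span_singleton_self a))
      · exact Finset.le_inf' _ _ fun i _ => hd (x i) (Submodule.mem_sup_left (memA i))
end
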